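/- arXiv:2301.00052 — 5 statements merged into one kernel-verified Lean document; each statement's English description precedes it below -/
import Mathlib

section
/- Every finitely generated torsion-free nilpotent group is left-orderable (indeed bi-orderable). -/
/-!
Torsion elements of a nilpotent group `G` form a subgroup, and `G` is bi-ordered modulo them; both
facts go by induction through `G ⧸ center G`. The positive cone is lexicographic: `g` is positive if
its image in `G ⧸ center G` is, or if some power `g ^ n` is central and positive for an order of
the center modulo its torsion (Levi: a torsion-free abelian group embeds in a lexicographically
ordered `ℚ`-vector space). Such roots of positive central elements are closed under products:
finitely generated torsion nilpotent groups are finite, so the center of `⟨u, v⟩` has finite index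
`N`, and the transfer `x ↦ x ^ N` into it is a homomorphism.
-/

/-- A monoid is torsion-free if no element except `1` has finite order
(the definition `Monoid.IsTorsionFree` of the older Mathlib, since removed). -/
def Monoid.IsTorsionFree (G : Type*) [Monoid G] : Prop :=
  ∀ g : G, g ≠ 1 → ¬IsOfFinOrder g

open Subgroup
open scoped IsMulCommutative

theorem IsMulTorsionFree.exists_linearOrder (H : Type*) [CommGroup H] [IsMulTorsionFree H] :
    ∃ _ : LinearOrder H, IsOrderedMonoid H := by
  let V := DivisibleHull (Additive H)
  let b := Module.Basis.ofVectorSpace ℚ V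
  obtain ⟨_, -⟩ := exists_wellFoundedLT (Module.Basis.ofVectorSpaceIndex ℚ V)
  let f : H → Multiplicative (Lex (_ →₀ ℚ)) := fun a =>
    .ofAdd (toLex (b.repr (DivisibleHull.coeAddMonoidHom _ (Additive.ofMul a : Additive H))))
  have hf : Function.Injective f :=
    Multiplicative.ofAdd.injective.comp <| toLex.injective.comp <| b.repr.injective.comp <|
      DivisibleHull.coe_injective.comp (Additive.ofMul (α := H)).injective
  let _ := LinearOrder.lift' f hf
  exact ⟨‹_›, Function.Injective.isOrderedMonoid f (fun a c => by simp [f]) Iff.rfl⟩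

theorem isOfFinOrder_of_mem_closure {G : Type*} [Group G]
    (hmul : ∀ x y : G, IsOfFinOrder x → IsOfFinOrder y → IsOfFinOrder (x * y))
    {S : Set G} (hS : ∀ s ∈ S, IsOfFinOrder s) {x : G} (hx : x ∈ closure S) :
    IsOfFinOrder x := by
  induction hx using closure_induction with
  | mem s hs => exact hS s hs
  | one => exact IsOfFinOrder.one
  | mul x y _ _ hx hy => exact hmul x y hx hy
  | inv x _ hx => exact hx.inv

theorem Group.IsNilpotent.finite_of_fg_isMulTorsion (G : Type*) [Group G] [Group.IsNilpotent G]
    [Group.FG G] (hG : IsMulTorsion G) : Finite G := by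
  refine Group.nilpotent_center_quotient_ind
    (P := fun G _ _ => ∀ [Group.FG G], IsMulTorsion G → Finite G)
    G (fun _ _ _ _ _ => inferInstance) ?_ hG
  intro G _ _ ih _ hG
  have : Finite (G ⧸ center G) := ih (hG.of_surjective (QuotientGroup.mk'_surjective _))
  have : (center G).FiniteIndex := finiteIndex_of_finite_quotient
  have : Group.FG (center G) := fg_of_index_ne_zero _
  have : Finite (center G) := CommGroup.finite_of_fg_isMulTorsion _ (hG.subgroup _)
  exact Finite.of_subgroup_quotient (center G)

theorem finiteIndex_center_of_isOfFinOrder {G : Type*} [Group G] [Group.IsNilpotent G]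
    (H : Subgroup G) [Group.FG H] (hH : ∀ h ∈ H, IsOfFinOrder (h : G ⧸ center G)) :
    (center H).FiniteIndex := by
  let f : H →* G ⧸ center G := (QuotientGroup.mk' (center G)).comp H.subtype
  have : Finite f.range := Group.IsNilpotent.finite_of_fg_isMulTorsion _ <| by
    rintro ⟨_, h, rfl⟩
    exact Submonoid.isOfFinOrder_coe.mp (hH h h.2)
  have hker : f.ker ≤ center H := fun h hh => mem_center_iff.mpr fun g =>
    Subtype.ext (mem_center_iff.mp ((QuotientGroup.eq_one_iff _).mp hh) g)
  exact finiteIndex_of_le hker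

theorem mul_pow_index_center {G : Type*} [Group G] [(center G).FiniteIndex] (x y : G) :
    (x * y) ^ (center G).index = x ^ (center G).index * y ^ (center G).index := by
  simp only [← MonoidHom.transferCenterPow_apply, map_mul, Subgroup.coe_mul]

theorem exists_mul_pow_eq_of_isOfFinOrder {G : Type*} [Group G] [Group.IsNilpotent G]
    (hQ : ∀ x y : G ⧸ center G, IsOfFinOrder x → IsOfFinOrder y → IsOfFinOrder (x * y))
    {u v : G} (hu : IsOfFinOrder (u : G ⧸ center G)) (hv : IsOfFinOrder (v : G ⧸ center G)) :
    ∃ N ≠ 0, ∀ n, (u * v) ^ (N * n) = u ^ (N * n) * v ^ (N * n) := by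
  let H := closure {u, v}
  have : (center H).FiniteIndex := finiteIndex_center_of_isOfFinOrder H fun h hh => by
    refine isOfFinOrder_of_mem_closure hQ (S := QuotientGroup.mk '' {u, v}) ?_ ?_
    · rintro _ ⟨w, hw | hw, rfl⟩ <;> simp_all
    · rw [← QuotientGroup.coe_mk', ← MonoidHom.map_closure]
      exact mem_map_of_mem _ hh
  let U : H := ⟨u, subset_closure (by simp)⟩
  let V : H := ⟨v, subset_closure (by simp)⟩
  have hcomm : Commute (U ^ (center H).index) (V ^ (center H).index) := by
    rw [← MonoidHom.transferCenterPow_apply]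
    exact (mem_center_iff.mp (MonoidHom.transferCenterPow H U).2 _).symm
  refine ⟨(center H).index, FiniteIndex.index_ne_zero, fun n => ?_⟩
  have key : (U * V) ^ ((center H).index * n) =
      U ^ ((center H).index * n) * V ^ ((center H).index * n) := by
    rw [pow_mul, mul_pow_index_center, hcomm.mul_pow, pow_mul, pow_mul]
  exact congrArg Subtype.val key

theorem Group.IsNilpotent.isOfFinOrder_mul {G : Type*} [Group G] [Group.IsNilpotent G] {a b : G}
    (ha : IsOfFinOrder a) (hb : IsOfFinOrder b) : IsOfFinOrder (a * b) := by
  refine Group.nilpotent_center_quotient_ind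
    (P := fun G _ _ => ∀ a b : G, IsOfFinOrder a → IsOfFinOrder b → IsOfFinOrder (a * b))
    G (fun _ _ _ _ _ _ _ => isOfFinOrder_of_finite _) ?_ a b ha hb
  intro G _ _ ih a b ha hb
  obtain ⟨N, hN, h⟩ := exists_mul_pow_eq_of_isOfFinOrder ih
    ((QuotientGroup.mk' _).isOfFinOrder ha) ((QuotientGroup.mk' _).isOfFinOrder hb)
  refine isOfFinOrder_iff_pow_eq_one.mpr
    ⟨N * (orderOf a * orderOf b), by positivity [ha.orderOf_pos, hb.orderOf_pos], ?_⟩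
  rw [h, orderOf_dvd_iff_pow_eq_one.mp (Dvd.dvd.mul_left (dvd_mul_right _ _) _),
    orderOf_dvd_iff_pow_eq_one.mp (Dvd.dvd.mul_left (dvd_mul_left _ _) _), one_mul]

/-- `P` is the positive cone of a bi-invariant order on `G` modulo its torsion elements. -/
structure IsConeModTorsion {G : Type*} [Group G] (P : Set G) : Prop where
  mul_mem {a b : G} : a ∈ P → b ∈ P → a * b ∈ P
  conj_mem {a : G} (b : G) : a ∈ P → b * a * b⁻¹ ∈ P
  inv_notMem {a : G} : a ∈ P → a⁻¹ ∉ P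
  mem_or_inv_mem_or_isOfFinOrder (a : G) : a ∈ P ∨ a⁻¹ ∈ P ∨ IsOfFinOrder a

namespace IsConeModTorsion

variable {G : Type*} [Group G] {P : Set G} {a t : G}

theorem one_notMem (hP : IsConeModTorsion P) : 1 ∉ P := fun h =>
  hP.inv_notMem h (by rwa [inv_one])

theorem pow_mem (hP : IsConeModTorsion P) (ha : a ∈ P) : ∀ {n : ℕ}, n ≠ 0 → a ^ n ∈ P
  | 1, _ => by rwa [pow_one]
  | n + 2, _ => by rw [pow_succ]; exact hP.mul_mem (hP.pow_mem ha n.succ_ne_zero) ha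

theorem not_isOfFinOrder (hP : IsConeModTorsion P) (ha : a ∈ P) : ¬IsOfFinOrder a := fun h => by
  obtain ⟨n, hn, h1⟩ := h.exists_pow_eq_one
  exact hP.one_notMem (h1 ▸ hP.pow_mem ha hn.ne')

theorem mul_mem_of_isOfFinOrder (hP : IsConeModTorsion P)
    (htor : ∀ x y : G, IsOfFinOrder x → IsOfFinOrder y → IsOfFinOrder (x * y))
    (ha : a ∈ P) (ht : IsOfFinOrder t) : a * t ∈ P := by
  rcases hP.mem_or_inv_mem_or_isOfFinOrder (a * t) with h | h | h
  · exact h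
  · exact absurd ht.inv (hP.not_isOfFinOrder (by simpa using hP.mul_mem h ha))
  · exact absurd (by simpa using htor _ _ h ht.inv) (hP.not_isOfFinOrder ha)

theorem isOfFinOrder_mul_mem (hP : IsConeModTorsion P)
    (htor : ∀ x y : G, IsOfFinOrder x → IsOfFinOrder y → IsOfFinOrder (x * y))
    (ht : IsOfFinOrder t) (ha : a ∈ P) : t * a ∈ P := by
  simpa using hP.mul_mem_of_isOfFinOrder htor (hP.conj_mem t ha) ht

theorem preimage {K : Type*} [Group K] {P : Set K} (hP : IsConeModTorsion P) (f : G →* K)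
    (hf : ∀ a, f a = 1 → IsOfFinOrder a) : IsConeModTorsion (f ⁻¹' P) where
  mul_mem ha hb := by simpa using hP.mul_mem ha hb
  conj_mem b ha := by simpa using hP.conj_mem (f b) ha
  inv_notMem ha := by simpa using hP.inv_notMem ha
  mem_or_inv_mem_or_isOfFinOrder a := by
    rcases hP.mem_or_inv_mem_or_isOfFinOrder (f a) with h | h | h
    · exact Or.inl h
    · exact Or.inr (Or.inl (by simpa using h))
    · obtain ⟨n, hn, h1⟩ := h.exists_pow_eq_one
      exact Or.inr (Or.inr ((hf _ (by rwa [map_pow])).of_pow hn.ne'))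

end IsConeModTorsion

theorem isConeModTorsion_one_lt (K : Type*) [CommGroup K] [LinearOrder K] [IsOrderedMonoid K] :
    IsConeModTorsion {x : K | 1 < x} where
  mul_mem ha hb := one_lt_mul'' ha hb
  conj_mem b ha := by rwa [Set.mem_ofPred_eq, mul_inv_cancel_comm]
  inv_notMem ha := by simpa using ha.le
  mem_or_inv_mem_or_isOfFinOrder a := by
    rcases lt_trichotomy 1 a with h | rfl | h
    · exact Or.inl h
    · exact Or.inr (Or.inr IsOfFinOrder.one)
    · exact Or.inr (Or.inl (one_lt_inv'.mpr h))

theorem exists_isConeModTorsion_of_commGroup (H : Type*) [CommGroup H] :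
    ∃ P : Set H, IsConeModTorsion P := by
  obtain ⟨_, _⟩ := IsMulTorsionFree.exists_linearOrder (H ⧸ CommGroup.torsion H)
  exact ⟨_, (isConeModTorsion_one_lt _).preimage (QuotientGroup.mk' (CommGroup.torsion H))
    fun a ha => (QuotientGroup.eq_one_iff a).mp ha⟩

section LexCone

variable {G : Type*} [Group G] {PQ : Set (G ⧸ center G)} {PZ : Set (center G)} {g : G}

def centralRoots (PZ : Set (center G)) : Set G :=
  {g | ∃ n ≠ 0, ∃ z ∈ PZ, (z : G) = g ^ n}

/-- Roots of central elements are needed because `G ⧸ center G` may have torsion. -/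
def lexCone (PQ : Set (G ⧸ center G)) (PZ : Set (center G)) : Set G :=
  {g | (g : G ⧸ center G) ∈ PQ} ∪ centralRoots PZ

theorem isOfFinOrder_mk_of_mem_centralRoots (hg : g ∈ centralRoots PZ) :
    IsOfFinOrder (g : G ⧸ center G) := by
  obtain ⟨n, hn, z, -, hz⟩ := hg
  refine isOfFinOrder_iff_pow_eq_one.mpr ⟨n, Nat.pos_of_ne_zero hn, ?_⟩
  rw [← QuotientGroup.mk_pow, ← hz, QuotientGroup.eq_one_iff]
  exact z.2

theorem conj_mem_centralRoots (b : G) (hg : g ∈ centralRoots PZ) :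
    b * g * b⁻¹ ∈ centralRoots PZ := by
  obtain ⟨n, hn, z, hz, hzg⟩ := hg
  refine ⟨n, hn, z, hz, ?_⟩
  rw [conj_pow, ← hzg, mem_center_iff.mp z.2 b, mul_inv_cancel_right]

theorem IsConeModTorsion.inv_notMem_centralRoots (hZ : IsConeModTorsion PZ)
    (hg : g ∈ centralRoots PZ) : g⁻¹ ∉ centralRoots PZ := by
  rintro ⟨l, hl, y, hy, hyg⟩
  obtain ⟨k, hk, x, hx, hxg⟩ := hg
  have hyx : y ^ k = (x ^ l)⁻¹ := Subtype.ext (by simp [hxg, hyg, ← pow_mul, mul_comm])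
  exact hZ.inv_notMem (hZ.pow_mem hx hl) (hyx ▸ hZ.pow_mem hy hk)

theorem IsConeModTorsion.mul_mem_centralRoots [Group.IsNilpotent G] (hZ : IsConeModTorsion PZ)
    {u v : G} (hu : u ∈ centralRoots PZ) (hv : v ∈ centralRoots PZ) :
    u * v ∈ centralRoots PZ := by
  obtain ⟨N, hN, hmul⟩ := exists_mul_pow_eq_of_isOfFinOrder
    (fun _ _ => Group.IsNilpotent.isOfFinOrder_mul)
    (isOfFinOrder_mk_of_mem_centralRoots hu) (isOfFinOrder_mk_of_mem_centralRoots hv)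
  obtain ⟨k, hk, x, hx, hxu⟩ := hu
  obtain ⟨l, hl, y, hy, hyv⟩ := hv
  refine ⟨N * (k * l), mul_ne_zero hN (mul_ne_zero hk hl), x ^ (N * l) * y ^ (N * k),
    hZ.mul_mem (hZ.pow_mem hx (mul_ne_zero hN hl)) (hZ.pow_mem hy (mul_ne_zero hN hk)), ?_⟩
  rw [hmul, coe_mul, coe_pow, coe_pow, hxu, hyv, ← pow_mul, ← pow_mul]
  congr 2 <;> ring

theorem IsConeModTorsion.mem_centralRoots_or_inv_mem_or_isOfFinOrder (hZ : IsConeModTorsion PZ)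
    (hg : IsOfFinOrder (g : G ⧸ center G)) :
    g ∈ centralRoots PZ ∨ g⁻¹ ∈ centralRoots PZ ∨ IsOfFinOrder g := by
  obtain ⟨n, hn, hgn⟩ := hg.exists_pow_eq_one
  have hc : g ^ n ∈ center G := by rwa [← QuotientGroup.eq_one_iff, QuotientGroup.mk_pow]
  rcases hZ.mem_or_inv_mem_or_isOfFinOrder ⟨g ^ n, hc⟩ with h | h | h
  · exact Or.inl ⟨n, hn.ne', _, h, rfl⟩
  · exact Or.inr (Or.inl ⟨n, hn.ne', _, h, by simp⟩)
  · exact Or.inr (Or.inr ((Submonoid.isOfFinOrder_coe.mpr h).of_pow hn.ne'))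

theorem IsConeModTorsion.lexCone [Group.IsNilpotent G] (hQ : IsConeModTorsion PQ)
    (hZ : IsConeModTorsion PZ) : IsConeModTorsion (lexCone PQ PZ) := by
  have htorQ : ∀ x y : G ⧸ center G, IsOfFinOrder x → IsOfFinOrder y → IsOfFinOrder (x * y) :=
    fun _ _ => Group.IsNilpotent.isOfFinOrder_mul
  constructor
  · rintro u v (hu | hu) (hv | hv)
    · exact Or.inl (hQ.mul_mem hu hv)
    · exact Or.inl (hQ.mul_mem_of_isOfFinOrder htorQ hu (isOfFinOrder_mk_of_mem_centralRoots hv))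
    · exact Or.inl (hQ.isOfFinOrder_mul_mem htorQ (isOfFinOrder_mk_of_mem_centralRoots hu) hv)
    · exact Or.inr (hZ.mul_mem_centralRoots hu hv)
  · rintro g b (hg | hg)
    · exact Or.inl (hQ.conj_mem (b : G ⧸ center G) hg)
    · exact Or.inr (conj_mem_centralRoots b hg)
  · rintro g (hg | hg) (hg' | hg')
    · exact hQ.inv_notMem hg hg'
    · exact hQ.not_isOfFinOrder hg (by simpa using isOfFinOrder_mk_of_mem_centralRoots hg')
    · exact hQ.not_isOfFinOrder hg' (isOfFinOrder_mk_of_mem_centralRoots hg).inv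
    · exact hZ.inv_notMem_centralRoots hg hg'
  · intro g
    rcases hQ.mem_or_inv_mem_or_isOfFinOrder (g : G ⧸ center G) with h | h | h
    · exact Or.inl (Or.inl h)
    · exact Or.inr (Or.inl (Or.inl h))
    · rcases hZ.mem_centralRoots_or_inv_mem_or_isOfFinOrder h with h | h | h
      · exact Or.inl (Or.inr h)
      · exact Or.inr (Or.inl (Or.inr h))
      · exact Or.inr (Or.inr h)

end LexCone

theorem Group.IsNilpotent.exists_isConeModTorsion (G : Type*) [Group G] [Group.IsNilpotent G] :
    ∃ P : Set G, IsConeModTorsion P := by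
  refine Group.nilpotent_center_quotient_ind
    (P := fun G _ _ => ∃ P : Set G, IsConeModTorsion P) G (fun G _ _ => ⟨∅, ?_⟩) ?_
  · exact ⟨False.elim, fun _ => False.elim, False.elim,
      fun a => Or.inr (Or.inr (isOfFinOrder_of_finite a))⟩
  · rintro G _ _ ⟨PQ, hQ⟩
    obtain ⟨PZ, hZ⟩ := exists_isConeModTorsion_of_commGroup (center G)
    exact ⟨_, hQ.lexCone hZ⟩

theorem IsConeModTorsion.isStrictTotalOrder {G : Type*} [Group G] {P : Set G}
    (hP : IsConeModTorsion P) (htf : Monoid.IsTorsionFree G) :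
    IsStrictTotalOrder G (fun a b => b * a⁻¹ ∈ P) where
  trichotomous a b hab hba := by
    by_contra hne
    rcases hP.mem_or_inv_mem_or_isOfFinOrder (b * a⁻¹) with h | h | h
    · exact hab h
    · exact hba (by simpa using h)
    · exact htf _ (mul_inv_eq_one.not.mpr (Ne.symm hne)) h
  irrefl a := by simpa using hP.one_notMem
  trans a b c hab hbc := by simpa [mul_assoc] using hP.mul_mem hbc hab

theorem stmt_7_general {G : Type*} [Group G]
    (hnil : Group.IsNilpotent G) (htf : Monoid.IsTorsionFree G) :
    ∃ r : G → G → Prop, IsStrictTotalOrder G r ∧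
      (∀ a b c : G, r a b → r (c * a) (c * b)) ∧
      (∀ a b c : G, r a b → r (a * c) (b * c)) := by
  obtain ⟨P, hP⟩ := Group.IsNilpotent.exists_isConeModTorsion G
  refine ⟨fun a b => b * a⁻¹ ∈ P, hP.isStrictTotalOrder htf, fun a b c h => ?_, fun a b c h => ?_⟩
  · simpa [mul_assoc] using hP.conj_mem c h
  · simpa [mul_assoc] using h

/-- Every finitely generated torsion-free nilpotent group is left-orderable,
indeed bi-orderable: it carries a strict total order invariant under both
left and right multiplication. -/
theorem stmt_7 {G : Type*} [Group G] (hfg : Group.FG G)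
    (hnil : Group.IsNilpotent G) (htf : Monoid.IsTorsionFree G) :
    ∃ r : G → G → Prop, IsStrictTotalOrder G r ∧
      (∀ a b c : G, r a b → r (c * a) (c * b)) ∧
      (∀ a b c : G, r a b → r (a * c) (b * c)) :=
  stmt_7_general hnil htf
end

section
/- The group G = ⟨t, x, y, z | [x,y] = z, [z,x] = [z,y] = 1, t² = z, t x t⁻¹ = x⁻¹, t y t⁻¹ = y⁻¹⟩ is not left-orderable. -/
inductive GGen | t | x | y | z

open FreeGroup in
/-- The relations of `G = ⟨t, x, y, z | [x,y] = z, [z,x] = [z,y] = 1, t² = z,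
t x t⁻¹ = x⁻¹, t y t⁻¹ = y⁻¹⟩`. -/
def gRels : Set (FreeGroup GGen) :=
  { of GGen.x * of GGen.y * (of GGen.x)⁻¹ * (of GGen.y)⁻¹ * (of GGen.z)⁻¹,
    of GGen.z * of GGen.x * (of GGen.z)⁻¹ * (of GGen.x)⁻¹,
    of GGen.z * of GGen.y * (of GGen.z)⁻¹ * (of GGen.y)⁻¹,
    of GGen.t * of GGen.t * (of GGen.z)⁻¹,
    of GGen.t * of GGen.x * (of GGen.t)⁻¹ * of GGen.x,
    of GGen.t * of GGen.y * (of GGen.t)⁻¹ * of GGen.y }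

/-- The group `G`. -/
abbrev GGrp : Type := PresentedGroup gRels

namespace GGrp
abbrev t : GGrp := PresentedGroup.of GGen.t
abbrev x : GGrp := PresentedGroup.of GGen.x
abbrev y : GGrp := PresentedGroup.of GGen.y
abbrev z : GGrp := PresentedGroup.of GGen.z
end GGrp

/-- A group is left-orderable if it carries a strict total order invariant under
left multiplication. -/
def IsLeftOrderable (G : Type*) [Group G] : Prop :=
  ∃ r : G → G → Prop, IsStrictTotalOrder G r ∧ ∀ a b c : G, r a b → r (c * a) (c * b)

lemma rel_one {r : FreeGroup GGen} (hr : r ∈ gRels) : PresentedGroup.mk gRels r = 1 :=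
  (QuotientGroup.eq_one_iff r).mpr (Subgroup.subset_normalClosure hr)

open GGrp in
lemma involution : (t * x * y⁻¹) * (t * x * y⁻¹) = 1 := by
  have h1 : x * y * x⁻¹ * y⁻¹ * z⁻¹ = 1 := by
    have := rel_one (Or.inl rfl); simp only [map_mul, map_inv] at this; exact this
  have h2 : z * x * z⁻¹ * x⁻¹ = 1 := by
    have := rel_one (Or.inr (Or.inl rfl)); simp only [map_mul, map_inv] at this; exact this
  have h4 : t * t * z⁻¹ = 1 := by
    have := rel_one (Or.inr (Or.inr (Or.inr (Or.inl rfl)))); simp only [map_mul, map_inv] at this; exact this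
  have h5 : t * x * t⁻¹ * x = 1 := by
    have := rel_one (Or.inr (Or.inr (Or.inr (Or.inr (Or.inl rfl))))); simp only [map_mul, map_inv] at this; exact this
  have h6 : t * y * t⁻¹ * y = 1 := by
    have := rel_one (Or.inr (Or.inr (Or.inr (Or.inr (Or.inr rfl))))); simp only [map_mul, map_inv] at this; exact this
  have e4 : t * t = z := by
    have := mul_inv_eq_one.mp h4; exact this
  have hxy : x * y * x⁻¹ * y⁻¹ = z := by
    have : x * y * x⁻¹ * y⁻¹ * z⁻¹ * z = 1 * z := by rw [h1]
    simpa using this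
  have e2 : z * x = x * z := by
    refine mul_inv_eq_one.mp ?_
    rw [show z * x * (x * z)⁻¹ = z * x * z⁻¹ * x⁻¹ * (z * z⁻¹) from by group]
    rw [h2]; group
  have e5' : x * t = t * x⁻¹ := by
    refine mul_inv_eq_one.mp ?_
    rw [show x * t * (t * x⁻¹)⁻¹ = x * (t * x * t⁻¹ * x) * x⁻¹ * (x * t * t⁻¹ * x⁻¹) from by group]
    rw [h5]; group
  have e6' : y⁻¹ * t = t * y := by
    refine mul_inv_eq_one.mp ?_
    rw [show y⁻¹ * t * (t * y)⁻¹ = (t * y * t⁻¹ * y)⁻¹ from by group]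
    rw [h6]; group
  have hyx : y * x * y⁻¹ * x⁻¹ = z⁻¹ := by
    rw [← hxy]; group
  have e7 : x⁻¹ * y * x = z⁻¹ * y := by
    refine mul_inv_eq_one.mp ?_
    rw [show x⁻¹ * y * x * (z⁻¹ * y)⁻¹ = x⁻¹ * (y * x * y⁻¹ * x⁻¹) * x * z from by group]
    rw [hyx]
    rw [show x⁻¹ * z⁻¹ * x * z = (z * x)⁻¹ * (x * z) from by group, e2]
    group
  calc (t * x * y⁻¹) * (t * x * y⁻¹)
      = t * x * (y⁻¹ * t) * (x * y⁻¹) := by group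
    _ = t * x * (t * y) * (x * y⁻¹) := by rw [e6']
    _ = t * (x * t) * (y * x * y⁻¹) := by group
    _ = t * (t * x⁻¹) * (y * x * y⁻¹) := by rw [e5']
    _ = (t * t) * (x⁻¹ * y * x) * y⁻¹ := by group
    _ = z * (z⁻¹ * y) * y⁻¹ := by rw [e4, e7]
    _ = 1 := by group

def φ : GGen → Multiplicative (ZMod 2) := fun g =>
  match g with
  | .t => Multiplicative.ofAdd 1
  | _ => 1

lemma hφ : ∀ r ∈ gRels, FreeGroup.lift φ r = 1 := by
  intro r hr
  rcases hr with rfl | rfl | rfl | rfl | rfl | rfl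
  all_goals simp only [map_mul, map_inv, FreeGroup.lift_apply_of]
  all_goals simp [φ]
  all_goals decide

open GGrp in
lemma nontrivial_g : t * x * y⁻¹ ≠ 1 := by
  intro h
  have h2 := congrArg (PresentedGroup.toGroup hφ) h
  simp only [map_mul, map_inv, map_one, PresentedGroup.toGroup.of] at h2
  revert h2
  simp [φ]


/-- The group `G = ⟨t, x, y, z | [x,y] = z, [z,x] = [z,y] = 1, t² = z, t x t⁻¹ = x⁻¹,
t y t⁻¹ = y⁻¹⟩` is not left-orderable. -/
theorem stmt_11 : ¬ IsLeftOrderable GGrp := by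
  rintro ⟨r, hsto, hmul⟩
  haveI := hsto
  set g : GGrp := GGrp.t * GGrp.x * GGrp.y⁻¹ with hg
  have hsq : g * g = 1 := involution
  have hne : g ≠ 1 := nontrivial_g
  rcases trichotomous_of r g 1 with hlt | heq | hgt
  · have := hmul g 1 g hlt
    rw [hsq, mul_one] at this
    exact hsto.irrefl g (hsto.trans g 1 g hlt this)
  · exact hne heq
  · have := hmul 1 g g hgt
    rw [hsq, mul_one] at this
    exact hsto.irrefl g (hsto.trans g 1 g this hgt)
end

section
/- In the group G = ⟨t, x, y, z | [x,y] = z, z central in ⟨x,y,z⟩, t² = z, t x t⁻¹ = x⁻¹, t y t⁻¹ = y⁻¹⟩, for all integers n, m one has (t x^n y^m)² = z^{mn+1}. -/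
lemma gRel_one {r : FreeGroup GGen} (h : r ∈ gRels) :
    (QuotientGroup.mk r : GGrp) = 1 :=
  (QuotientGroup.eq_one_iff r).2 (Subgroup.subset_normalClosure h)

/-- generic swap helper -/
lemma swap {G : Type*} [Group G] {a b : G} (h : Commute a b) (w : G) :
    a * (b * w) = b * (a * w) := by rw [← mul_assoc, h.eq, mul_assoc]

lemma rel_comm : GGrp.x * GGrp.y = GGrp.z * (GGrp.y * GGrp.x) := by
  have h := gRel_one (r := FreeGroup.of GGen.x * FreeGroup.of GGen.y *
      (FreeGroup.of GGen.x)⁻¹ * (FreeGroup.of GGen.y)⁻¹ * (FreeGroup.of GGen.z)⁻¹)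
      (by simp [gRels])
  simp only [QuotientGroup.mk_mul, QuotientGroup.mk_inv] at h
  change GGrp.x * GGrp.y * GGrp.x⁻¹ * GGrp.y⁻¹ * GGrp.z⁻¹ = 1 at h
  rw [mul_inv_eq_one, mul_inv_eq_iff_eq_mul, mul_inv_eq_iff_eq_mul] at h
  rw [h, mul_assoc]

lemma rel_zx : Commute GGrp.z GGrp.x := by
  have h := gRel_one (r := FreeGroup.of GGen.z * FreeGroup.of GGen.x *
      (FreeGroup.of GGen.z)⁻¹ * (FreeGroup.of GGen.x)⁻¹) (by simp [gRels])
  simp only [QuotientGroup.mk_mul, QuotientGroup.mk_inv] at h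
  change GGrp.z * GGrp.x * GGrp.z⁻¹ * GGrp.x⁻¹ = 1 at h
  rw [mul_inv_eq_one, mul_inv_eq_iff_eq_mul] at h
  exact h

lemma rel_zy : Commute GGrp.z GGrp.y := by
  have h := gRel_one (r := FreeGroup.of GGen.z * FreeGroup.of GGen.y *
      (FreeGroup.of GGen.z)⁻¹ * (FreeGroup.of GGen.y)⁻¹) (by simp [gRels])
  simp only [QuotientGroup.mk_mul, QuotientGroup.mk_inv] at h
  change GGrp.z * GGrp.y * GGrp.z⁻¹ * GGrp.y⁻¹ = 1 at h
  rw [mul_inv_eq_one, mul_inv_eq_iff_eq_mul] at h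
  exact h

lemma rel_tt : GGrp.t * GGrp.t = GGrp.z := by
  have h := gRel_one (r := FreeGroup.of GGen.t * FreeGroup.of GGen.t *
      (FreeGroup.of GGen.z)⁻¹) (by simp [gRels])
  simp only [QuotientGroup.mk_mul, QuotientGroup.mk_inv] at h
  rw [mul_inv_eq_one] at h
  exact h

lemma rel_tx : GGrp.t * GGrp.x * GGrp.t⁻¹ = GGrp.x⁻¹ := by
  have h := gRel_one (r := FreeGroup.of GGen.t * FreeGroup.of GGen.x *
      (FreeGroup.of GGen.t)⁻¹ * FreeGroup.of GGen.x) (by simp [gRels])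
  simp only [QuotientGroup.mk_mul, QuotientGroup.mk_inv] at h
  rw [mul_eq_one_iff_eq_inv] at h
  exact h

lemma rel_ty : GGrp.t * GGrp.y * GGrp.t⁻¹ = GGrp.y⁻¹ := by
  have h := gRel_one (r := FreeGroup.of GGen.t * FreeGroup.of GGen.y *
      (FreeGroup.of GGen.t)⁻¹ * FreeGroup.of GGen.y) (by simp [gRels])
  simp only [QuotientGroup.mk_mul, QuotientGroup.mk_inv] at h
  rw [mul_eq_one_iff_eq_inv] at h
  exact h

lemma conj_x_zpow (n : ℤ) : GGrp.t * GGrp.x ^ n = GGrp.x ^ (-n) * GGrp.t := by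
  have h : (MulAut.conj GGrp.t) (GGrp.x ^ n) = ((MulAut.conj GGrp.t) GGrp.x) ^ n :=
    map_zpow _ _ _
  simp only [MulAut.conj_apply, ← mul_assoc, rel_tx, inv_zpow, ← zpow_neg] at h
  rw [← h, mul_assoc, inv_mul_cancel, mul_one]

lemma conj_y_zpow (m : ℤ) : GGrp.y ^ m * GGrp.t = GGrp.t * GGrp.y ^ (-m) := by
  have h : (MulAut.conj GGrp.t) (GGrp.y ^ (-m)) = ((MulAut.conj GGrp.t) GGrp.y) ^ (-m) :=
    map_zpow _ _ _
  simp only [MulAut.conj_apply, ← mul_assoc, rel_ty, inv_zpow, ← zpow_neg, neg_neg] at h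
  rw [← h, inv_mul_cancel_right]

lemma rel_comm_inv : GGrp.x⁻¹ * GGrp.y = GGrp.z⁻¹ * (GGrp.y * GGrp.x⁻¹) := by
  apply mul_left_cancel (a := GGrp.x)
  rw [← mul_assoc, mul_inv_cancel, one_mul, swap rel_zx.symm.inv_right,
    ← mul_assoc GGrp.x, rel_comm]
  simp [mul_assoc]

lemma xpow_y (n : ℤ) : GGrp.x ^ n * GGrp.y = GGrp.z ^ n * (GGrp.y * GGrp.x ^ n) := by
  induction n using Int.induction_on with
  | zero => simp
  | succ k ih =>
      rw [zpow_add_one, mul_assoc, rel_comm, swap (rel_zx.zpow_right (k:ℤ)).symm,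
        ← mul_assoc (GGrp.x ^ (k:ℤ)), ih, zpow_add_one]
      simp only [mul_assoc]
      rw [swap ((Commute.refl GGrp.z).zpow_right (k:ℤ))]
  | pred k ih =>
      rw [sub_eq_add_neg, zpow_add, zpow_neg_one, mul_assoc, rel_comm_inv,
        swap (rel_zx.zpow_right (-k:ℤ)).inv_left.symm, ← mul_assoc (GGrp.x ^ (-k:ℤ)),
        ih, zpow_add, zpow_neg_one]
      simp only [mul_assoc]
      rw [swap (((Commute.refl GGrp.z).zpow_right (-k:ℤ)).inv_left)]

lemma xpow_yinv (n : ℤ) : GGrp.x ^ n * GGrp.y⁻¹ = GGrp.z ^ (-n) * (GGrp.y⁻¹ * GGrp.x ^ n) := by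
  apply mul_right_cancel (b := GGrp.y)
  rw [mul_assoc, inv_mul_cancel, mul_one, mul_assoc, mul_assoc, xpow_y,
    swap ((rel_zy.zpow_left n).inv_right.symm), ← mul_assoc, ← zpow_add,
    neg_add_cancel, zpow_zero, one_mul, ← mul_assoc, inv_mul_cancel, one_mul]

lemma xpow_ypow (n m : ℤ) :
    GGrp.x ^ n * GGrp.y ^ m = GGrp.z ^ (n * m) * (GGrp.y ^ m * GGrp.x ^ n) := by
  induction m using Int.induction_on with
  | zero => simp
  | succ k ih =>
      rw [zpow_add_one, ← mul_assoc, ih, mul_assoc, mul_assoc, xpow_y,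
        swap ((rel_zy.zpow_left n).zpow_right (k:ℤ)).symm, ← mul_assoc, ← zpow_add,
        show n * (k:ℤ) + n = n * ((k:ℤ) + 1) by ring]
      simp only [mul_assoc]
  | pred k ih =>
      rw [sub_eq_add_neg, zpow_add, zpow_neg_one, ← mul_assoc, ih, mul_assoc, mul_assoc,
        xpow_yinv, swap ((rel_zy.zpow_left (-n)).zpow_right (-k:ℤ)).symm, ← mul_assoc,
        ← zpow_add, show n * (-(k:ℤ)) + -n = n * (-(k:ℤ) + -1) by ring]
      simp only [mul_assoc]

lemma reassoc {G : Type*} [Group G] {a b c : G} (h : a * b = c) (w : G) :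
    a * (b * w) = c * w := by rw [← mul_assoc, h]

/-- In `G`, for all integers `n, m`, `(t xⁿ yᵐ)² = z^(mn+1)`. -/
theorem stmt_13 (n m : ℤ) :
    (GGrp.t * GGrp.x ^ n * GGrp.y ^ m) ^ 2 = GGrp.z ^ (m * n + 1) := by
  have key : GGrp.y ^ (-m) * GGrp.x ^ n
      = GGrp.z ^ (n * m) * (GGrp.x ^ n * GGrp.y ^ (-m)) := by
    rw [xpow_ypow n (-m), ← mul_assoc, ← zpow_add,
      show n * m + n * (-m) = 0 by ring, zpow_zero, one_mul]
  have hxt : GGrp.x ^ n * GGrp.t = GGrp.t * GGrp.x ^ (-n) := by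
    have h := conj_x_zpow (-n)
    simp only [neg_neg] at h
    exact h.symm
  rw [sq]
  simp only [mul_assoc]
  rw [← mul_assoc (GGrp.y ^ m) GGrp.t, conj_y_zpow, mul_assoc,
    ← mul_assoc (GGrp.x ^ n) GGrp.t, hxt, mul_assoc,
    reassoc key]
  simp only [mul_assoc]
  rw [← zpow_add GGrp.y, neg_add_cancel, zpow_zero, mul_one,
    swap ((rel_zx.symm.zpow_left (-n)).zpow_right (n * m)),
    ← zpow_add GGrp.x, neg_add_cancel, zpow_zero, mul_one,
    ← mul_assoc, rel_tt,
    show m * n + 1 = 1 + n * m by ring, zpow_add, zpow_one]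
end

section
/- There exists a torsion-free polycyclic group that is not left-orderable; specifically, Γ = ⟨t, u, v | [u,v] = t⁴, t u t⁻¹ = u⁻¹, t v t⁻¹ = v⁻¹⟩ is torsion-free, contains an index-two subgroup isomorphic to a finite-index subgroup of the Heisenberg group, and is not left-orderable. -/
/-- The integral Heisenberg group, encoded by the three above-diagonal entries of a
`3 × 3` upper-triangular integer matrix with 1's on the diagonal. -/
def Heis : Type := ℤ × ℤ × ℤ

namespace Heis

instance : Mul Heis := ⟨fun a b => (a.1 + b.1, a.2.1 + b.2.1, a.2.2 + b.2.2 + a.1 * b.2.1)⟩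
instance : One Heis := ⟨((0 : ℤ), (0 : ℤ), (0 : ℤ))⟩
instance : Inv Heis := ⟨fun a => (-a.1, -a.2.1, -a.2.2 + a.1 * a.2.1)⟩

lemma mul_def (a b : Heis) :
    a * b = (a.1 + b.1, a.2.1 + b.2.1, a.2.2 + b.2.2 + a.1 * b.2.1) := rfl
lemma one_def : (1 : Heis) = ((0 : ℤ), (0 : ℤ), (0 : ℤ)) := rfl
lemma inv_def (a : Heis) : a⁻¹ = (-a.1, -a.2.1, -a.2.2 + a.1 * a.2.1) := rfl

instance : Group Heis where
  mul_assoc a b c := by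
    rw [mul_def, mul_def, mul_def a, mul_def]
    refine Prod.ext ?_ (Prod.ext ?_ ?_) <;> simp <;> ring
  one_mul a := by
    rw [mul_def]
    refine Prod.ext ?_ (Prod.ext ?_ ?_) <;> simp [one_def]
  mul_one a := by
    rw [mul_def]
    refine Prod.ext ?_ (Prod.ext ?_ ?_) <;> simp [one_def]
  inv_mul_cancel a := by
    rw [mul_def, inv_def]
    refine Prod.ext ?_ (Prod.ext ?_ ?_) <;> simp [one_def] <;> ring

end Heis

inductive ΓGen | t | u | v

open FreeGroup in
/-- The relations of `Γ = ⟨t, u, v | [u,v] = t⁴, t u t⁻¹ = u⁻¹, t v t⁻¹ = v⁻¹⟩`. -/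
def ΓRels : Set (FreeGroup ΓGen) :=
  { of ΓGen.u * of ΓGen.v * (of ΓGen.u)⁻¹ * (of ΓGen.v)⁻¹ * (of ΓGen.t ^ 4)⁻¹,
    of ΓGen.t * of ΓGen.u * (of ΓGen.t)⁻¹ * of ΓGen.u,
    of ΓGen.t * of ΓGen.v * (of ΓGen.t)⁻¹ * of ΓGen.v }

/-!
Every element of `Γ` has a unique normal form `u ^ x * v ^ y * t ^ a`: the normal forms are
stable under left multiplication by the generators, and reading off `(x, y, a)` is a
homomorphism onto `ℤ³` with a twisted multiplication. In these coordinates the elements with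
`a` even form an index-two subgroup, which `(x, y, a) ↦ (y, -2x, a / 2)` maps isomorphically
onto the index-two subgroup of the Heisenberg group with even middle entry.

Torsion-freeness: every square lies in that subgroup, the Heisenberg group is torsion-free
(its abelianization `ℤ²` and its centre `ℤ` are), and no element has order two.

No left order: four elements with the same square `t² ≠ 1` have product `1`. For a left order,
an element with a positive square is positive and products of positive elements are positive;
passing to inverses covers `t² < 1`.
-/

namespace IsLeftOrderable

section PositiveCone

variable {G : Type*} [Group G] {r : G → G → Prop} [IsStrictTotalOrder G r]

theorem pos_mul (hr : ∀ a b c : G, r a b → r (c * a) (c * b))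
    {a b : G} (ha : r 1 a) (hb : r 1 b) : r 1 (a * b) :=
  _root_.trans ha (by simpa using hr 1 b a hb)

theorem pos_or_pos_inv (hr : ∀ a b c : G, r a b → r (c * a) (c * b))
    {g : G} (hg : g ≠ 1) : r 1 g ∨ r 1 g⁻¹ := by
  rcases trichotomous_of r 1 g with h | h | h
  · exact Or.inl h
  · exact absurd h.symm hg
  · exact Or.inr (by simpa using hr g 1 g⁻¹ h)

theorem pos_of_pos_sq (hr : ∀ a b c : G, r a b → r (c * a) (c * b))
    {g : G} (hg : r 1 (g ^ 2)) : r 1 g := by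
  rcases eq_or_ne g 1 with rfl | hne
  · exact absurd (by simpa using hg) (irrefl (r := r) 1)
  refine (pos_or_pos_inv hr hne).resolve_right fun hinv => irrefl (r := r) 1 ?_
  simpa [sq] using pos_mul hr hg (pos_mul hr hinv hinv)

theorem pos_prod (hr : ∀ a b c : G, r a b → r (c * a) (c * b))
    {l : List G} (hl : l ≠ []) (hpos : ∀ g ∈ l, r 1 g) : r 1 l.prod := by
  induction l with
  | nil => exact absurd rfl hl
  | cons g l ih =>
    rcases eq_or_ne l [] with rfl | hl'
    · simpa using hpos g (by simp)
    · exact pos_mul hr (hpos g (by simp)) (ih hl' fun h hh => hpos h (by simp [hh]))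

theorem prod_ne_one_of_forall_sq_eq_pos (hr : ∀ a b c : G, r a b → r (c * a) (c * b))
    {z : G} (hz : r 1 z) {l : List G} (hl : l ≠ [])
    (hsq : ∀ g ∈ l, g ^ 2 = z) : l.prod ≠ 1 := fun h =>
  irrefl (r := r) 1 (h ▸ pos_prod hr hl fun g hg => pos_of_pos_sq hr (hsq g hg ▸ hz))

end PositiveCone

theorem prod_ne_one_of_forall_sq_eq {G : Type*} [Group G] (hG : IsLeftOrderable G) {z : G}
    (hz : z ≠ 1) {l : List G} (hl : l ≠ []) (hsq : ∀ g ∈ l, g ^ 2 = z) : l.prod ≠ 1 := by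
  obtain ⟨r, _, hr⟩ := hG
  rcases pos_or_pos_inv hr hz with hpos | hpos
  · exact prod_ne_one_of_forall_sq_eq_pos hr hpos hl hsq
  · rw [← inv_ne_one, List.prod_inv_reverse]
    refine prod_ne_one_of_forall_sq_eq_pos hr hpos (by simpa using hl) ?_
    intro g hg
    obtain ⟨h, hh, rfl⟩ := List.mem_map.mp (List.mem_reverse.mp hg)
    rw [inv_pow, hsq h hh]

theorem of_injective {G H : Type*} [Group G] [Group H] (f : G →* H) (hf : Function.Injective f)
    (hH : IsLeftOrderable H) : IsLeftOrderable G := by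
  obtain ⟨r, _, hr⟩ := hH
  refine ⟨InvImage r f, { toTrichotomous := InvImage.trichotomous hf }, fun a b c h => ?_⟩
  simpa [InvImage] using hr (f a) (f b) (f c) h

end IsLeftOrderable

theorem zpow_eq_of_map_add {G : Type*} [Group G] (f : ℤ → G) (hf : ∀ m n, f (m + n) = f m * f n)
    (n : ℤ) : f 1 ^ n = f n := by
  simpa using (map_zpow (MonoidHom.mk' (fun m : Multiplicative ℤ => f m.toAdd) fun _ _ => hf _ _)
    (Multiplicative.ofAdd 1) n).symm

section ConjugationIdentities

variable {G : Type*} [Group G]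

theorem conj_zpow_of_conj_eq_inv {t w : G} (h : t * w * t⁻¹ = w⁻¹) (n : ℤ) :
    t * w ^ n * t⁻¹ = w ^ (-n) := by
  rw [← conj_zpow, h, inv_zpow, zpow_neg]

theorem commute_sq_of_conj_eq_inv {t w : G} (h : t * w * t⁻¹ = w⁻¹) : Commute (t ^ 2) w := by
  have hconj : t ^ 2 * w * (t ^ 2)⁻¹ = w :=
    calc t ^ 2 * w * (t ^ 2)⁻¹ = (t * (t * w * t⁻¹)⁻¹ * t⁻¹)⁻¹ := by group
      _ = w := by rw [h, inv_inv, h, inv_inv]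
  exact mul_inv_eq_iff_eq_mul.mp hconj

theorem conj_zpow_of_commutator_eq {u v c : G} (h : u * v * u⁻¹ * v⁻¹ = c) (hc : Commute c u)
    (n : ℤ) : v * u ^ n * v⁻¹ = u ^ n * c ^ (-n) := by
  have hvu : v * u * v⁻¹ = c⁻¹ * u := by rw [← h]; group
  rw [← conj_zpow, hvu, hc.inv_left.mul_zpow, ((hc.inv_left.zpow_left n).zpow_right n).eq,
    inv_zpow']

end ConjugationIdentities

namespace Heis

def mk (p q r : ℤ) : Heis := (p, q, r)

lemma mk_mul_mk (p q r p' q' r' : ℤ) :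
    mk p q r * mk p' q' r' = mk (p + p') (q + q') (r + r' + p * q') :=
  rfl

def abelianization : Heis →* Multiplicative (ℤ × ℤ) :=
  MonoidHom.mk' (fun g => Multiplicative.ofAdd (g.1, g.2.1)) fun _ _ => rfl

def centralEmbedding : Multiplicative ℤ →* Heis :=
  MonoidHom.mk' (fun r => mk 0 0 r.toAdd) fun r s => by simp [mk_mul_mk]

theorem centralEmbedding_injective : Function.Injective centralEmbedding := fun _ _ h =>
  congrArg (fun g : Heis => Multiplicative.ofAdd g.2.2) h

theorem eq_one_of_isOfFinOrder {g : Heis} (hg : IsOfFinOrder g) : g = 1 := by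
  have hpq : g.1 = 0 ∧ g.2.1 = 0 := by
    simpa [abelianization, Prod.ext_iff] using (abelianization.isOfFinOrder hg).eq_one'
  have hcentral : centralEmbedding (Multiplicative.ofAdd g.2.2) = g :=
    Prod.ext hpq.1.symm (Prod.ext hpq.2.symm rfl)
  rw [← hcentral, centralEmbedding_injective.isOfFinOrder_iff] at hg
  rw [← hcentral, hg.eq_one', map_one]

end Heis

/-- `⟨x, y, a⟩` stands for the normal form `u ^ x * v ^ y * t ^ a` of an element of `Γ`. -/
@[ext]
structure ΓModel where
  x : ℤ
  y : ℤ
  a : ℤ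

namespace ΓModel

/-- `t ^ a` conjugates `u ^ X` and `v ^ Y` to `u ^ (ε X)` and `v ^ (ε Y)`, `ε = (-1) ^ a`, and
`v ^ y * u ^ X = u ^ X * v ^ y * t ^ (-4 X y)` because `[u, v] = t ^ 4` is central. -/
instance : Mul ΓModel :=
  ⟨fun g h => ⟨g.x + g.a.negOnePow * h.x, g.y + g.a.negOnePow * h.y,
    g.a + h.a - 4 * (g.y * (g.a.negOnePow * h.x))⟩⟩

instance : One ΓModel := ⟨⟨0, 0, 0⟩⟩

instance : Inv ΓModel :=
  ⟨fun g => ⟨-(g.a.negOnePow * g.x), -(g.a.negOnePow * g.y), -g.a - 4 * (g.x * g.y)⟩⟩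

@[simp] lemma mul_x (g h : ΓModel) : (g * h).x = g.x + g.a.negOnePow * h.x := rfl
@[simp] lemma mul_y (g h : ΓModel) : (g * h).y = g.y + g.a.negOnePow * h.y := rfl
@[simp] lemma mul_a (g h : ΓModel) : (g * h).a = g.a + h.a - 4 * (g.y * (g.a.negOnePow * h.x)) :=
  rfl
@[simp] lemma one_x : (1 : ΓModel).x = 0 := rfl
@[simp] lemma one_y : (1 : ΓModel).y = 0 := rfl
@[simp] lemma one_a : (1 : ΓModel).a = 0 := rfl
@[simp] lemma inv_x (g : ΓModel) : g⁻¹.x = -(g.a.negOnePow * g.x) := rfl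
@[simp] lemma inv_y (g : ΓModel) : g⁻¹.y = -(g.a.negOnePow * g.y) := rfl
@[simp] lemma inv_a (g : ΓModel) : g⁻¹.a = -g.a - 4 * (g.x * g.y) := rfl

lemma negOnePow_sub_four_mul (a k : ℤ) : (a - 4 * k).negOnePow = a.negOnePow := by
  rw [Int.negOnePow_sub, Int.negOnePow_even (4 * k) ⟨2 * k, by ring⟩, mul_one]

instance : Group ΓModel where
  mul_assoc g h k := by
    have hε := Int.units_coe_mul_self g.a.negOnePow
    ext <;> simp only [mul_x, mul_y, mul_a, negOnePow_sub_four_mul, Int.negOnePow_add,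
      Units.val_mul]
    · ring
    · ring
    · linear_combination (-4 * h.y * h.a.negOnePow * k.x) * hε
  one_mul g := by ext <;> simp
  mul_one g := by ext <;> simp
  inv_mul_cancel g := by
    have hε := Int.units_coe_mul_self g.a.negOnePow
    ext <;> simp only [mul_x, mul_y, mul_a, inv_x, inv_y, inv_a, negOnePow_sub_four_mul,
      Int.negOnePow_neg, one_x, one_y, one_a]
    · ring
    · ring
    · linear_combination (4 * g.x * g.y) * hε

def t : ΓModel := ⟨0, 0, 1⟩
def u : ΓModel := ⟨1, 0, 0⟩
def v : ΓModel := ⟨0, 1, 0⟩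

lemma u_zpow (n : ℤ) : u ^ n = ⟨n, 0, 0⟩ :=
  zpow_eq_of_map_add (fun n => (⟨n, 0, 0⟩ : ΓModel)) (fun _ _ => by ext <;> simp) n

lemma v_zpow (n : ℤ) : v ^ n = ⟨0, n, 0⟩ :=
  zpow_eq_of_map_add (fun n => (⟨0, n, 0⟩ : ΓModel)) (fun _ _ => by ext <;> simp) n

lemma t_zpow (n : ℤ) : t ^ n = ⟨0, 0, n⟩ :=
  zpow_eq_of_map_add (fun n => (⟨0, 0, n⟩ : ΓModel)) (fun _ _ => by ext <;> simp) n

lemma u_zpow_mul_v_zpow_mul_t_zpow (g : ΓModel) : u ^ g.x * v ^ g.y * t ^ g.a = g := by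
  rw [u_zpow, v_zpow, t_zpow]; ext <;> simp

lemma eq_one_of_mul_self_eq_one {g : ΓModel} (hg : g * g = 1) : g = 1 := by
  have hx := congrArg ΓModel.x hg
  have hy := congrArg ΓModel.y hg
  have ha := congrArg ΓModel.a hg
  simp only [mul_x, mul_y, mul_a, one_x, one_y, one_a] at hx hy ha
  rcases Int.even_or_odd g.a with heven | hodd
  · simp only [Int.negOnePow_even _ heven, Units.val_one, one_mul] at hx hy ha
    have hx0 : g.x = 0 := by omega
    have hy0 : g.y = 0 := by omega
    simp only [hx0, hy0, mul_zero, sub_zero] at ha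
    ext <;> simp <;> omega
  · simp only [Int.negOnePow_odd _ hodd, Units.val_neg, Units.val_one, neg_one_mul, mul_neg]
      at ha
    obtain ⟨k, hk⟩ := hodd
    omega

def evenSubgroup : Subgroup ΓModel where
  carrier := {g | Even g.a}
  mul_mem' {g h} hg hh := (hg.add hh).sub ⟨2 * (g.y * (g.a.negOnePow * h.x)), by ring⟩
  one_mem' := Even.zero
  inv_mem' {g} hg := hg.neg.sub ⟨2 * (g.x * g.y), by ring⟩

lemma mem_evenSubgroup {g : ΓModel} : g ∈ evenSubgroup ↔ Even g.a := Iff.rfl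

lemma mul_self_mem_evenSubgroup (g : ΓModel) : g * g ∈ evenSubgroup :=
  (Even.add_self g.a).sub ⟨2 * (g.y * (g.a.negOnePow * g.x)), by ring⟩

lemma index_evenSubgroup : evenSubgroup.index = 2 :=
  Subgroup.index_eq_two_iff.mpr ⟨t, fun g => by simp [mem_evenSubgroup, t, ← Int.not_even_iff_odd]⟩

/-- Sends `u`, `v`, `t ^ 2` to `(0, -2, 0)`, `(1, 0, 0)`, `(0, 0, 1)`, which satisfy
`[u, v] = t ^ 4` in `Heis`. -/
def evenSubgroupToHeis : evenSubgroup →* Heis where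
  toFun g := Heis.mk g.1.y (-2 * g.1.x) (g.1.a / 2)
  map_one' := rfl
  map_mul' g h := by
    obtain ⟨a, ha⟩ := g.2
    obtain ⟨b, hb⟩ := h.2
    have hε : (g.1.a.negOnePow : ℤ) = 1 := by rw [Int.negOnePow_even _ g.2, Units.val_one]
    rw [Heis.mk_mul_mk]
    simp only [Subgroup.coe_mul, mul_x, mul_y, mul_a, hε, one_mul]
    congr 1
    · ring
    · rw [show g.1.y * (-2 * h.1.x) = -2 * (g.1.y * h.1.x) by ring, ha, hb]
      omega

@[simp] lemma evenSubgroupToHeis_apply (g : evenSubgroup) :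
    evenSubgroupToHeis g = Heis.mk g.1.y (-2 * g.1.x) (g.1.a / 2) :=
  rfl

lemma evenSubgroupToHeis_injective : Function.Injective evenSubgroupToHeis := by
  intro g h hgh
  have hy : g.1.y = h.1.y := congrArg (fun p : Heis => p.1) hgh
  have hx : -2 * g.1.x = -2 * h.1.x := congrArg (fun p : Heis => p.2.1) hgh
  have ha : g.1.a / 2 = h.1.a / 2 := congrArg (fun p : Heis => p.2.2) hgh
  obtain ⟨a, hga⟩ := g.2
  obtain ⟨b, hhb⟩ := h.2
  ext <;> omega

lemma mem_range_evenSubgroupToHeis {p : Heis} : p ∈ evenSubgroupToHeis.range ↔ Even p.2.1 := by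
  constructor
  · rintro ⟨g, rfl⟩
    exact ⟨-g.1.x, by simp [Heis.mk]; ring⟩
  · rintro ⟨k, hk⟩
    refine ⟨⟨⟨-k, p.1, 2 * p.2.2⟩, even_two_mul _⟩, ?_⟩
    simp only [evenSubgroupToHeis_apply, Heis.mk]
    refine Prod.ext rfl (Prod.ext ?_ (by simp))
    simp only
    omega

lemma index_range_evenSubgroupToHeis : evenSubgroupToHeis.range.index = 2 :=
  Subgroup.index_eq_two_iff.mpr ⟨Heis.mk 0 1 0, fun p => by
    rw [mem_range_evenSubgroupToHeis, mem_range_evenSubgroupToHeis, Heis.mul_def]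
    simp [Heis.mk, ← Int.not_even_iff_odd]⟩

theorem eq_one_of_isOfFinOrder {g : ΓModel} (hg : IsOfFinOrder g) : g = 1 := by
  refine eq_one_of_mul_self_eq_one ?_
  have hsq : IsOfFinOrder (⟨g * g, mul_self_mem_evenSubgroup g⟩ : evenSubgroup) := by
    have hg2 : IsOfFinOrder (g * g) := sq g ▸ hg.pow
    exact evenSubgroup.subtype_injective.isOfFinOrder_iff.mp hg2
  simpa using congrArg Subtype.val <| evenSubgroupToHeis_injective <|
    (Heis.eq_one_of_isOfFinOrder (evenSubgroupToHeis.isOfFinOrder hsq)).trans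
      (map_one evenSubgroupToHeis).symm

/-- Each of the four factors `u⁻² t`, `v⁻¹ t`, `t`, `u⁻² v t⁵` squares to `t²`. -/
theorem not_isLeftOrderable : ¬ IsLeftOrderable ΓModel := fun h =>
  h.prod_ne_one_of_forall_sq_eq (z := t * t) (l := [⟨-2, 0, 1⟩, ⟨0, -1, 1⟩, t, ⟨-2, 1, 5⟩])
    (fun ht => absurd (congrArg ΓModel.a ht) (by simp [t])) (List.cons_ne_nil _ _)
    (fun g hg => by
      simp only [List.mem_cons, List.not_mem_nil, or_false] at hg
      rcases hg with rfl | rfl | rfl | rfl <;> rfl)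
    rfl

end ΓModel

abbrev Γ : Type := PresentedGroup ΓRels

namespace Γ

def t : Γ := PresentedGroup.of ΓGen.t
def u : Γ := PresentedGroup.of ΓGen.u
def v : Γ := PresentedGroup.of ΓGen.v

lemma commutator_u_v : u * v * u⁻¹ * v⁻¹ = t ^ 4 := by
  have h := PresentedGroup.mk_eq_mk_of_mul_inv_mem (rels := ΓRels)
    (x := .of .u * .of .v * (.of .u)⁻¹ * (.of .v)⁻¹) (y := .of .t ^ 4) (Set.mem_insert _ _)
  simp only [map_mul, map_inv, map_pow] at h
  exact h

lemma conj_u : t * u * t⁻¹ = u⁻¹ := by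
  have h := PresentedGroup.mk_eq_mk_of_mul_inv_mem (rels := ΓRels)
    (x := .of .t * .of .u * (.of .t)⁻¹) (y := (.of .u)⁻¹) (by simp [ΓRels])
  simp only [map_mul, map_inv] at h
  exact h

lemma conj_v : t * v * t⁻¹ = v⁻¹ := by
  have h := PresentedGroup.mk_eq_mk_of_mul_inv_mem (rels := ΓRels)
    (x := .of .t * .of .v * (.of .t)⁻¹) (y := (.of .v)⁻¹) (by simp [ΓRels])
  simp only [map_mul, map_inv] at h
  exact h

def ofModel (g : ΓModel) : Γ := u ^ g.x * v ^ g.y * t ^ g.a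

def genToModel : ΓGen → ΓModel
  | .t => ΓModel.t
  | .u => ΓModel.u
  | .v => ΓModel.v

lemma genToModel_rels : ∀ r ∈ ΓRels, FreeGroup.lift genToModel r = 1 := by
  rintro r (rfl | rfl | rfl) <;> rfl

def toModel : Γ →* ΓModel := PresentedGroup.toGroup genToModel_rels

lemma toModel_t : toModel t = ΓModel.t := PresentedGroup.toGroup.of genToModel_rels
lemma toModel_u : toModel u = ΓModel.u := PresentedGroup.toGroup.of genToModel_rels
lemma toModel_v : toModel v = ΓModel.v := PresentedGroup.toGroup.of genToModel_rels

lemma toModel_ofModel (g : ΓModel) : toModel (ofModel g) = g := by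
  simp only [ofModel, map_mul, map_zpow, toModel_t, toModel_u, toModel_v,
    ΓModel.u_zpow_mul_v_zpow_mul_t_zpow]

lemma ofModel_u_mul (g : ΓModel) : ofModel (ΓModel.u * g) = u * ofModel g := by
  have : ΓModel.u * g = ⟨1 + g.x, g.y, g.a⟩ := by ext <;> simp [ΓModel.u]
  rw [this, ofModel, ofModel, zpow_one_add]
  group

lemma ofModel_t_mul (g : ΓModel) : ofModel (ΓModel.t * g) = t * ofModel g := by
  have : ΓModel.t * g = ⟨-g.x, -g.y, 1 + g.a⟩ := by ext <;> simp [ΓModel.t]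
  rw [this, ofModel, ofModel, zpow_one_add, ← conj_zpow_of_conj_eq_inv conj_u,
    ← conj_zpow_of_conj_eq_inv conj_v]
  group

lemma ofModel_v_mul (g : ΓModel) : ofModel (ΓModel.v * g) = v * ofModel g := by
  have : ΓModel.v * g = ⟨g.x, 1 + g.y, g.a - 4 * g.x⟩ := by ext <;> simp [ΓModel.v]
  have hcomm : Commute (t ^ 4) u := by
    simpa [← pow_mul] using (commute_sq_of_conj_eq_inv conj_u).pow_left 2
  have hcomm' : Commute (t ^ 4) v := by
    simpa [← pow_mul] using (commute_sq_of_conj_eq_inv conj_v).pow_left 2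
  calc ofModel (ΓModel.v * g) = u ^ g.x * (v ^ (1 + g.y) * (t ^ 4) ^ (-g.x)) * t ^ g.a := by
        rw [this, ofModel]; group
    _ = u ^ g.x * ((t ^ 4) ^ (-g.x) * v ^ (1 + g.y)) * t ^ g.a := by
        rw [((hcomm'.zpow_left _).zpow_right _).eq]
    _ = (u ^ g.x * (t ^ 4) ^ (-g.x)) * v ^ (1 + g.y) * t ^ g.a := by group
    _ = v * ofModel g := by
        rw [← conj_zpow_of_commutator_eq commutator_u_v hcomm, ofModel, zpow_one_add]; group

lemma ofModel_toModel_mul (z : Γ) (g : ΓModel) : ofModel (toModel z * g) = z * ofModel g := by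
  have hz : z ∈ Subgroup.closure (Set.range PresentedGroup.of) := by
    rw [PresentedGroup.closure_range_of]; trivial
  induction hz using Subgroup.closure_induction generalizing g with
  | mem _ hs =>
    obtain ⟨s, rfl⟩ := hs
    cases s
    · exact (congrArg (ofModel <| · * g) toModel_t).trans (ofModel_t_mul g)
    · exact (congrArg (ofModel <| · * g) toModel_u).trans (ofModel_u_mul g)
    · exact (congrArg (ofModel <| · * g) toModel_v).trans (ofModel_v_mul g)
  | one => simp
  | mul z w _ _ hz hw => rw [map_mul, mul_assoc, hz, hw, mul_assoc]
  | inv z _ hz => rw [eq_inv_mul_iff_mul_eq, ← hz, map_inv, mul_inv_cancel_left]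

def equivModel : Γ ≃* ΓModel where
  toFun := toModel
  invFun := ofModel
  left_inv z := by simpa [ofModel] using ofModel_toModel_mul z 1
  right_inv := toModel_ofModel
  map_mul' := map_mul toModel

end Γ

/-- `Γ = ⟨t, u, v | [u,v] = t⁴, t u t⁻¹ = u⁻¹, t v t⁻¹ = v⁻¹⟩` is a torsion-free group,
which contains an index-two subgroup isomorphic to a finite-index subgroup of the
Heisenberg group, and which is not left-orderable. -/
theorem stmt_15 :
    (∀ g : PresentedGroup ΓRels, g ≠ 1 → ¬IsOfFinOrder g) ∧
    (∃ K : Subgroup (PresentedGroup ΓRels), K.index = 2 ∧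
      ∃ L : Subgroup Heis, L.index ≠ 0 ∧ Nonempty (K ≃* L)) ∧
    ¬ IsLeftOrderable (PresentedGroup ΓRels) := by
  let e : ΓModel ≃* Γ := Γ.equivModel.symm
  refine ⟨fun g hg hfin => hg ?_, ?_, fun h => ΓModel.not_isLeftOrderable ?_⟩
  · simpa using ΓModel.eq_one_of_isOfFinOrder (e.symm.toMonoidHom.isOfFinOrder hfin)
  · refine ⟨ΓModel.evenSubgroup.map (e : ΓModel →* Γ), ?_, _, ?_,
      ⟨(e.subgroupMap _).symm.trans (MonoidHom.ofInjective ΓModel.evenSubgroupToHeis_injective)⟩⟩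
    · rw [Subgroup.index_map_equiv, ΓModel.index_evenSubgroup]
    · rw [ΓModel.index_range_evenSubgroupToHeis]; decide
  · exact h.of_injective e.toMonoidHom e.injective
end

section
/- Let Γ_n = ⟨s, x | [sⁿ, x] = 1, [x, sⁱ x s⁻ⁱ] = 1 for 1 ≤ i ≤ n−1⟩ and set x_i = sⁱ x s⁻ⁱ. Then the elements x₀, …, x_{n−1} generate a normal subgroup N_n of Γ_n isomorphic to ℤⁿ, and the quotient Γ_n / N_n is isomorphic to ℤ. -/
inductive ΓnGen | s | x

open FreeGroup in
/-- The relations of `Γₙ = ⟨s, x | [sⁿ, x] = 1, [x, sⁱ x s⁻ⁱ] = 1 for 1 ≤ i ≤ n - 1⟩`. -/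
def ΓnRels (n : ℕ) : Set (FreeGroup ΓnGen) :=
  { of ΓnGen.s ^ n * of ΓnGen.x * (of ΓnGen.s ^ n)⁻¹ * (of ΓnGen.x)⁻¹ } ∪
  { w | ∃ i : ℕ, 1 ≤ i ∧ i ≤ n - 1 ∧
      w = of ΓnGen.x * (of ΓnGen.s ^ i * of ΓnGen.x * (of ΓnGen.s ^ i)⁻¹) *
            (of ΓnGen.x)⁻¹ * (of ΓnGen.s ^ i * of ΓnGen.x * (of ΓnGen.s ^ i)⁻¹)⁻¹ }

/-- The element `xᵢ = sⁱ x s⁻ⁱ` of `Γₙ`. -/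
def xi (n : ℕ) (i : ℕ) : PresentedGroup (ΓnRels n) :=
  PresentedGroup.of ΓnGen.s ^ i * PresentedGroup.of ΓnGen.x *
    (PresentedGroup.of ΓnGen.s ^ i)⁻¹

namespace GammaAux

open Multiplicative SemidirectProduct
open Fin.NatCast

abbrev Γ (n : ℕ) := PresentedGroup (ΓnRels n)

/-- the defining set of generators of `Nₙ` -/
def SS (n : ℕ) : Set (Γ n) := {g | ∃ i : ℕ, i < n ∧ g = xi n i}

/-! ### Relations inside `Γₙ` -/

theorem mk_rel {n : ℕ} {r : FreeGroup ΓnGen} (hr : r ∈ ΓnRels n) :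
    PresentedGroup.mk (ΓnRels n) r = 1 :=
  (QuotientGroup.eq_one_iff _).mpr (Subgroup.subset_normalClosure hr)

theorem comm1 (n : ℕ) :
    (PresentedGroup.of ΓnGen.s : Γ n) ^ n * PresentedGroup.of ΓnGen.x *
      ((PresentedGroup.of ΓnGen.s : Γ n) ^ n)⁻¹ = PresentedGroup.of ΓnGen.x := by
  have h := mk_rel (n := n) (Or.inl rfl)
  simp only [map_mul, map_pow, map_inv] at h
  have h' : ((PresentedGroup.of ΓnGen.s : Γ n) ^ n * PresentedGroup.of ΓnGen.x *
      ((PresentedGroup.of ΓnGen.s : Γ n) ^ n)⁻¹ * (PresentedGroup.of ΓnGen.x)⁻¹) = 1 := h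
  calc (PresentedGroup.of ΓnGen.s : Γ n) ^ n * PresentedGroup.of ΓnGen.x *
        ((PresentedGroup.of ΓnGen.s : Γ n) ^ n)⁻¹
      = ((PresentedGroup.of ΓnGen.s : Γ n) ^ n * PresentedGroup.of ΓnGen.x *
        ((PresentedGroup.of ΓnGen.s : Γ n) ^ n)⁻¹ * (PresentedGroup.of ΓnGen.x)⁻¹) *
          PresentedGroup.of ΓnGen.x := by group
    _ = PresentedGroup.of ΓnGen.x := by rw [h']; group

theorem comm2 (n : ℕ) {i : ℕ} (h1 : 1 ≤ i) (h2 : i ≤ n - 1) :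
    Commute (PresentedGroup.of ΓnGen.x : Γ n) (xi n i) := by
  have h := mk_rel (n := n) (Or.inr ⟨i, h1, h2, rfl⟩)
  simp only [map_mul, map_pow, map_inv] at h
  have h' : (PresentedGroup.of ΓnGen.x : Γ n) * xi n i *
      (PresentedGroup.of ΓnGen.x)⁻¹ * (xi n i)⁻¹ = 1 := by
    simpa [xi, mul_assoc, PresentedGroup.of] using h
  have := mul_eq_one_iff_eq_inv.mp h'
  rw [Commute, SemiconjBy]
  calc (PresentedGroup.of ΓnGen.x : Γ n) * xi n i
      = ((PresentedGroup.of ΓnGen.x : Γ n) * xi n i *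
          (PresentedGroup.of ΓnGen.x)⁻¹ * (xi n i)⁻¹) * (xi n i * PresentedGroup.of ΓnGen.x) := by
        group
    _ = xi n i * PresentedGroup.of ΓnGen.x := by rw [h']; group

theorem xi_zero (n : ℕ) : xi n 0 = PresentedGroup.of ΓnGen.x := by simp [xi]

theorem s_conj (n i : ℕ) :
    PresentedGroup.of ΓnGen.s * xi n i * (PresentedGroup.of ΓnGen.s)⁻¹ = xi n (i + 1) := by
  simp only [xi, pow_succ]
  group

theorem xi_add_n (n i : ℕ) : xi n (i + n) = xi n i := by
  have h := comm1 n
  simp only [xi, pow_add]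
  calc (PresentedGroup.of ΓnGen.s : Γ n) ^ i * PresentedGroup.of ΓnGen.s ^ n *
        PresentedGroup.of ΓnGen.x *
        ((PresentedGroup.of ΓnGen.s : Γ n) ^ i * PresentedGroup.of ΓnGen.s ^ n)⁻¹
      = (PresentedGroup.of ΓnGen.s : Γ n) ^ i *
          ((PresentedGroup.of ΓnGen.s : Γ n) ^ n * PresentedGroup.of ΓnGen.x *
            ((PresentedGroup.of ΓnGen.s : Γ n) ^ n)⁻¹) *
          ((PresentedGroup.of ΓnGen.s : Γ n) ^ i)⁻¹ := by group
    _ = _ := by rw [h]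

theorem xi_mod (n i : ℕ) : xi n i = xi n (i % n) := by
  conv_lhs => rw [← Nat.mod_add_div i n]
  generalize i / n = q
  induction q with
  | zero => simp
  | succ q ih =>
      have : i % n + n * (q + 1) = (i % n + n * q) + n := by ring
      rw [this, xi_add_n, ih]

theorem comm_x_xi (n : ℕ) [NeZero n] (i : ℕ) :
    Commute (PresentedGroup.of ΓnGen.x : Γ n) (xi n i) := by
  rw [xi_mod]
  rcases Nat.eq_zero_or_pos (i % n) with h | h
  · rw [h, xi_zero]
  · exact comm2 n h (by
      have : i % n < n := Nat.mod_lt _ (Nat.pos_of_ne_zero (NeZero.ne n))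
      omega)

theorem comm_xi_xi (n : ℕ) [NeZero n] (i j : ℕ) : Commute (xi n i) (xi n j) := by
  have key : ∀ a c : ℕ, Commute (xi n a) (xi n (a + c)) := by
    intro a c
    have h := (comm_x_xi n c).map
      (MulAut.conj ((PresentedGroup.of ΓnGen.s : Γ n) ^ a)).toMonoidHom
    simp only [MulEquiv.coe_toMonoidHom, MulAut.conj_apply] at h
    have e1 : (PresentedGroup.of ΓnGen.s : Γ n) ^ a * PresentedGroup.of ΓnGen.x *
        ((PresentedGroup.of ΓnGen.s : Γ n) ^ a)⁻¹ = xi n a := rfl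
    have e2 : (PresentedGroup.of ΓnGen.s : Γ n) ^ a * xi n c *
        ((PresentedGroup.of ΓnGen.s : Γ n) ^ a)⁻¹ = xi n (a + c) := by
      simp only [xi, pow_add]
      group
    rwa [e1, e2] at h
  rcases le_total i j with h | h
  · have := key i (j - i)
    rwa [show i + (j - i) = j by omega] at this
  · have := key j (i - j)
    rw [show j + (i - j) = i by omega] at this
    exact this.symm

/-! ### The target semidirect product `ℤⁿ ⋊ ℤ` -/

/-- cyclic shift of coordinates -/
def shiftAddEquiv (n : ℕ) [NeZero n] : (Fin n → ℤ) ≃+ (Fin n → ℤ) where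
  toFun v j := v (j - 1)
  invFun v j := v (j + 1)
  left_inv v := funext fun j => by simp
  right_inv v := funext fun j => by simp
  map_add' _ _ := rfl

def σ (n : ℕ) [NeZero n] : MulAut (Multiplicative (Fin n → ℤ)) :=
  AddEquiv.toMultiplicative (shiftAddEquiv n)

def φmap (n : ℕ) [NeZero n] : Multiplicative ℤ →* MulAut (Multiplicative (Fin n → ℤ)) :=
  zpowersHom _ (σ n)

abbrev GG (n : ℕ) [NeZero n] :=
  SemidirectProduct (Multiplicative (Fin n → ℤ)) (Multiplicative ℤ) (φmap n)

theorem σ_apply (n : ℕ) [NeZero n] (v : Fin n → ℤ) :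
    σ n (ofAdd v) = ofAdd (fun j => v (j - 1)) := rfl

theorem σ_pow (n : ℕ) [NeZero n] (k : ℕ) (v : Fin n → ℤ) :
    ((σ n) ^ k) (ofAdd v) = ofAdd (fun j => v (j - (k : Fin n))) := by
  induction k with
  | zero => simp
  | succ k ih =>
      rw [pow_succ', MulAut.mul_apply, ih, σ_apply]
      congr 1
      funext j
      rw [sub_sub, Nat.cast_add, Nat.cast_one, add_comm]

def Fmap (n : ℕ) [NeZero n] : ΓnGen → GG n
  | .s => inr (ofAdd 1)
  | .x => inl (ofAdd (Pi.single 0 1))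

theorem ofAdd_one_pow (k : ℕ) : (ofAdd (1 : ℤ)) ^ k = ofAdd (k : ℤ) := by
  apply Multiplicative.toAdd.injective
  simp [toAdd_pow]

theorem conj_inl (n : ℕ) [NeZero n] (i : ℕ) (a : Multiplicative (Fin n → ℤ)) :
    (inr (ofAdd (i : ℤ)) : GG n) * inl a * (inr (ofAdd (i : ℤ)))⁻¹ =
      inl (((σ n) ^ i) a) := by
  rw [← map_inv, ← inl_aut]
  have : (φmap n) (ofAdd (i : ℤ)) = (σ n) ^ i := by
    rw [φmap, zpowersHom_apply, toAdd_ofAdd, zpow_natCast]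
  rw [this]

theorem lift_word (n : ℕ) [NeZero n] (i : ℕ) :
    FreeGroup.lift (Fmap n)
      (FreeGroup.of ΓnGen.s ^ i * FreeGroup.of ΓnGen.x * (FreeGroup.of ΓnGen.s ^ i)⁻¹) =
      inl (ofAdd (Pi.single (i : Fin n) 1)) := by
  rw [map_mul, map_mul, map_inv, map_pow, FreeGroup.lift_apply_of, FreeGroup.lift_apply_of]
  show (inr (ofAdd 1) : GG n) ^ i * inl (ofAdd (Pi.single 0 1)) *
    ((inr (ofAdd 1) : GG n) ^ i)⁻¹ = _
  rw [← map_pow, ofAdd_one_pow, conj_inl, σ_pow]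
  have : (fun j => (Pi.single (0 : Fin n) 1 : Fin n → ℤ) (j - (i : Fin n))) =
      (Pi.single ((i : Fin n)) 1 : Fin n → ℤ) := by
    funext j
    simp only [Pi.single_apply, sub_eq_zero]
  rw [this]

theorem lift_rels (n : ℕ) [NeZero n] :
    ∀ r ∈ ΓnRels n, FreeGroup.lift (Fmap n) r = 1 := by
  rintro r (h | ⟨i, hi1, hi2, rfl⟩)
  · rw [Set.mem_singleton_iff] at h
    subst h
    rw [map_mul, lift_word, map_inv, FreeGroup.lift_apply_of]
    show (inl (ofAdd (Pi.single ((n : Fin n)) 1)) : GG n) *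
      (inl (ofAdd (Pi.single 0 1)))⁻¹ = 1
    rw [Fin.natCast_self, ← map_inv, ← map_mul, mul_inv_cancel, map_one]
  · rw [map_mul, map_mul, map_mul, map_inv, map_inv, lift_word, FreeGroup.lift_apply_of]
    show (inl (ofAdd (Pi.single 0 1)) : GG n) * inl (ofAdd (Pi.single ((i : Fin n)) 1)) *
      (inl (ofAdd (Pi.single 0 1)))⁻¹ * (inl (ofAdd (Pi.single ((i : Fin n)) 1)))⁻¹ = 1
    have hc : Commute (inl (ofAdd (Pi.single (0 : Fin n) 1 : Fin n → ℤ)) : GG n)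
        (inl (ofAdd (Pi.single ((i : Fin n)) 1 : Fin n → ℤ))) :=
      Commute.map (mul_comm (ofAdd (Pi.single (0 : Fin n) 1 : Fin n → ℤ))
        (ofAdd (Pi.single ((i : Fin n)) 1 : Fin n → ℤ))) inl
    rw [hc.eq]
    group

/-- The homomorphism `Γₙ →* ℤⁿ ⋊ ℤ`. -/
def Φ (n : ℕ) [NeZero n] : Γ n →* GG n := PresentedGroup.toGroup (lift_rels n)

@[simp] theorem Φ_s (n : ℕ) [NeZero n] :
    Φ n (PresentedGroup.of ΓnGen.s) = inr (ofAdd 1) := PresentedGroup.toGroup.of _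

@[simp] theorem Φ_x (n : ℕ) [NeZero n] :
    Φ n (PresentedGroup.of ΓnGen.x) = inl (ofAdd (Pi.single 0 1)) := PresentedGroup.toGroup.of _

theorem Φ_xi (n : ℕ) [NeZero n] (i : ℕ) :
    Φ n (xi n i) = inl (ofAdd (Pi.single (i : Fin n) 1)) := by
  rw [xi, map_mul, map_mul, map_inv, map_pow, Φ_s, Φ_x, ← map_pow, ofAdd_one_pow, conj_inl,
    σ_pow]
  congr 1
  congr 1
  funext j
  simp only [Pi.single_apply, sub_eq_zero]

/-! ### The projection to ℤ -/

def fhom (n : ℕ) [NeZero n] : Γ n →* Multiplicative ℤ := rightHom.comp (Φ n)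

theorem fhom_xi (n : ℕ) [NeZero n] (i : ℕ) : fhom n (xi n i) = 1 := by
  simp [fhom, Φ_xi]

theorem H_le_ker (n : ℕ) [NeZero n] : Subgroup.closure (SS n) ≤ (fhom n).ker := by
  rw [Subgroup.closure_le]
  rintro g ⟨i, _, rfl⟩
  exact fhom_xi n i

theorem right_of_mem (n : ℕ) [NeZero n] {g : Γ n} (hg : g ∈ Subgroup.closure (SS n)) :
    (Φ n g).right = 1 := H_le_ker n hg

/-! ### Normality -/

theorem conj_mem_of_conj_gen (n : ℕ) (a : Γ n)
    (hS : ∀ g ∈ SS n, a * g * a⁻¹ ∈ Subgroup.closure (SS n)) :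
    ∀ g ∈ Subgroup.closure (SS n), a * g * a⁻¹ ∈ Subgroup.closure (SS n) := by
  intro g hg
  have h2 : (Subgroup.closure (SS n)).map (MulAut.conj a).toMonoidHom ≤
      Subgroup.closure (SS n) := by
    rw [MonoidHom.map_closure]
    refine (Subgroup.closure_le _).mpr ?_
    rintro _ ⟨y, hy, rfl⟩
    simpa [MulAut.conj_apply, mul_assoc] using hS y hy
  have : (MulAut.conj a).toMonoidHom g ∈
      (Subgroup.closure (SS n)).map (MulAut.conj a).toMonoidHom :=
    Subgroup.mem_map.mpr ⟨g, hg, rfl⟩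
  simpa [MulAut.conj_apply, mul_assoc] using h2 this

def K (n : ℕ) : Subgroup (Γ n) where
  carrier := {h | ∀ g ∈ Subgroup.closure (SS n),
    h * g * h⁻¹ ∈ Subgroup.closure (SS n) ∧ h⁻¹ * g * h ∈ Subgroup.closure (SS n)}
  one_mem' := by intro g hg; simpa using hg
  mul_mem' := by
    intro a b ha hb g hg
    constructor
    · have h1 := (ha _ ((hb g hg).1)).1
      have heq : a * b * g * (a * b)⁻¹ = a * (b * g * b⁻¹) * a⁻¹ := by group
      rw [heq]; exact h1
    · have h1 := (hb _ ((ha g hg).2)).2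
      have heq : (a * b)⁻¹ * g * (a * b) = b⁻¹ * (a⁻¹ * g * a) * b := by group
      rw [heq]; exact h1
  inv_mem' := by
    intro a ha g hg
    constructor
    · have h1 := (ha g hg).2
      have heq : a⁻¹ * g * a⁻¹⁻¹ = a⁻¹ * g * a := by group
      rw [heq]; exact h1
    · have h1 := (ha g hg).1
      have heq : a⁻¹⁻¹ * g * a⁻¹ = a * g * a⁻¹ := by group
      rw [heq]; exact h1

theorem s_mem_K (n : ℕ) [NeZero n] : PresentedGroup.of ΓnGen.s ∈ K n := by
  have npos : 0 < n := Nat.pos_of_ne_zero (NeZero.ne n)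
  have h1 : ∀ g ∈ Subgroup.closure (SS n),
      PresentedGroup.of ΓnGen.s * g * (PresentedGroup.of ΓnGen.s)⁻¹ ∈
        Subgroup.closure (SS n) := by
    apply conj_mem_of_conj_gen
    rintro g ⟨i, _, rfl⟩
    rw [s_conj, xi_mod]
    exact Subgroup.subset_closure ⟨(i + 1) % n, Nat.mod_lt _ npos, rfl⟩
  have h2 : ∀ g ∈ Subgroup.closure (SS n),
      (PresentedGroup.of ΓnGen.s)⁻¹ * g * ((PresentedGroup.of ΓnGen.s)⁻¹)⁻¹ ∈
        Subgroup.closure (SS n) := by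
    apply conj_mem_of_conj_gen
    rintro g ⟨i, _, rfl⟩
    have e1 : xi n i = xi n ((i + (n - 1)) + 1) := by
      rw [show (i + (n - 1)) + 1 = i + n by omega, xi_add_n]
    have e2 : (PresentedGroup.of ΓnGen.s)⁻¹ * xi n i * ((PresentedGroup.of ΓnGen.s)⁻¹)⁻¹ =
        xi n (i + (n - 1)) := by
      rw [e1, ← s_conj]
      group
    rw [e2, xi_mod]
    exact Subgroup.subset_closure ⟨(i + (n - 1)) % n, Nat.mod_lt _ npos, rfl⟩
  exact fun g hg => ⟨h1 g hg, by simpa using h2 g hg⟩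

theorem x_mem_K (n : ℕ) [NeZero n] : PresentedGroup.of ΓnGen.x ∈ K n := by
  have h1 : ∀ g ∈ Subgroup.closure (SS n),
      PresentedGroup.of ΓnGen.x * g * (PresentedGroup.of ΓnGen.x)⁻¹ ∈
        Subgroup.closure (SS n) := by
    apply conj_mem_of_conj_gen
    rintro g ⟨i, hi, rfl⟩
    have : PresentedGroup.of ΓnGen.x * xi n i * (PresentedGroup.of ΓnGen.x)⁻¹ = xi n i := by
      rw [(comm_x_xi n i).eq]; group
    rw [this]
    exact Subgroup.subset_closure ⟨i, hi, rfl⟩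
  have h2 : ∀ g ∈ Subgroup.closure (SS n),
      (PresentedGroup.of ΓnGen.x)⁻¹ * g * ((PresentedGroup.of ΓnGen.x)⁻¹)⁻¹ ∈
        Subgroup.closure (SS n) := by
    apply conj_mem_of_conj_gen
    rintro g ⟨i, hi, rfl⟩
    have : (PresentedGroup.of ΓnGen.x)⁻¹ * xi n i * ((PresentedGroup.of ΓnGen.x)⁻¹)⁻¹ =
        xi n i := by
      rw [inv_inv, (comm_x_xi n i).inv_left.eq]
      group
    rw [this]
    exact Subgroup.subset_closure ⟨i, hi, rfl⟩
  exact fun g hg => ⟨h1 g hg, by simpa using h2 g hg⟩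

theorem H_normal (n : ℕ) [NeZero n] : (Subgroup.closure (SS n)).Normal := by
  constructor
  intro g hg h
  have hK : h ∈ K n := PresentedGroup.generated_by _ (K n)
    (fun j => by cases j with | s => exact s_mem_K n | x => exact x_mem_K n) h
  have hK' : ∀ g ∈ Subgroup.closure (SS n),
      h * g * h⁻¹ ∈ Subgroup.closure (SS n) ∧ h⁻¹ * g * h ∈ Subgroup.closure (SS n) := hK
  exact (hK' g hg).1

/-! ### The isomorphism `Nₙ ≃* ℤⁿ` -/

instance commH (n : ℕ) [NeZero n] : CommGroup (Subgroup.closure (SS n)) :=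
  Subgroup.closureCommGroupOfComm (by
    rintro a ⟨i, _, rfl⟩ b ⟨j, _, rfl⟩
    exact (comm_xi_xi n i j).eq)

def X (n : ℕ) [NeZero n] (i : Fin n) : Subgroup.closure (SS n) :=
  ⟨xi n i.val, Subgroup.subset_closure ⟨i.val, i.isLt, rfl⟩⟩

def leftH (n : ℕ) [NeZero n] : Subgroup.closure (SS n) →* Multiplicative (Fin n → ℤ) where
  toFun g := (Φ n (g : Γ n)).left
  map_one' := by simp
  map_mul' a b := by
    have ha := right_of_mem n a.2
    show (Φ n ((a : Γ n) * b)).left = _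
    rw [map_mul, mul_left, ha, map_one, MulAut.one_apply]

theorem leftH_X (n : ℕ) [NeZero n] (i : Fin n) :
    leftH n (X n i) = ofAdd (Pi.single i 1) := by
  show (Φ n (xi n i.val)).left = _
  rw [Φ_xi]
  simp [left_inl]

def ψ (n : ℕ) [NeZero n] : Multiplicative (Fin n → ℤ) →* Subgroup.closure (SS n) where
  toFun v := ∏ i : Fin n, X n i ^ (v.toAdd i)
  map_one' := by simp
  map_mul' u v := by
    simp only [toAdd_mul, Pi.add_apply, zpow_add, Finset.prod_mul_distrib]

theorem leftH_ψ (n : ℕ) [NeZero n] (v : Multiplicative (Fin n → ℤ)) :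
    leftH n (ψ n v) = v := by
  show leftH n (∏ i : Fin n, X n i ^ (v.toAdd i)) = v
  rw [map_prod]
  simp only [map_zpow, leftH_X]
  apply Multiplicative.toAdd.injective
  rw [toAdd_prod]
  simp only [toAdd_zpow, toAdd_ofAdd]
  calc ∑ i : Fin n, v.toAdd i • Pi.single i (1 : ℤ)
      = ∑ i : Fin n, Pi.single i (v.toAdd i) := by
        apply Finset.sum_congr rfl
        intro i _
        rw [← Pi.single_smul, smul_eq_mul, mul_one]
    _ = v.toAdd := Finset.univ_sum_single _

theorem ψ_leftH (n : ℕ) [NeZero n] (g : Subgroup.closure (SS n)) :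
    ψ n (leftH n g) = g := by
  obtain ⟨g, hg⟩ := g
  apply Subtype.ext
  show ((ψ n ((Φ n g).left) : Subgroup.closure (SS n)) : Γ n) = g
  induction hg using Subgroup.closure_induction with
  | mem g hgS =>
      obtain ⟨i, hi, rfl⟩ := hgS
      rw [Φ_xi, left_inl]
      have : (ψ n (ofAdd (Pi.single ((i : Fin n)) 1))) = X n ⟨i, hi⟩ := by
        show (∏ j : Fin n, X n j ^ ((ofAdd (Pi.single ((i : Fin n)) 1)).toAdd j)) = _
        rw [toAdd_ofAdd]
        rw [Fintype.prod_eq_single (⟨i, hi⟩ : Fin n)]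
        · rw [show ((i : Fin n)) = (⟨i, hi⟩ : Fin n) by
            apply Fin.ext; simp [Fin.val_cast_of_lt hi]]
          simp
        · intro j hj
          rw [Pi.single_apply, if_neg, zpow_zero]
          intro hji
          apply hj
          rw [hji]
          apply Fin.ext; simp [Fin.val_cast_of_lt hi]
      rw [this, X]
  | one => simp
  | mul a b ha hb iha ihb =>
      have hra := right_of_mem n ha
      rw [map_mul, mul_left, hra, map_one, MulAut.one_apply, map_mul, Subgroup.coe_mul,
        iha, ihb]
  | inv a ha iha =>
      have hra := right_of_mem n ha
      rw [map_inv, inv_left, hra, inv_one, map_one, MulAut.one_apply, map_inv,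
        Subgroup.coe_inv, iha]

def isoH (n : ℕ) [NeZero n] : Subgroup.closure (SS n) ≃* Multiplicative (Fin n → ℤ) where
  toFun := leftH n
  invFun := ψ n
  left_inv := ψ_leftH n
  right_inv := leftH_ψ n
  map_mul' := (leftH n).map_mul

/-! ### Surjectivity and kernel -/

theorem fhom_surjective (n : ℕ) [NeZero n] : Function.Surjective (fhom n) := by
  intro b
  refine ⟨(PresentedGroup.of ΓnGen.s : Γ n) ^ (b.toAdd), ?_⟩
  rw [map_zpow]
  have : fhom n (PresentedGroup.of ΓnGen.s) = ofAdd 1 := by simp [fhom]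
  rw [this]
  apply Multiplicative.toAdd.injective
  simp [toAdd_zpow]

theorem sup_top (n : ℕ) [NeZero n] :
    Subgroup.closure (SS n) ⊔ Subgroup.zpowers (PresentedGroup.of ΓnGen.s : Γ n) = ⊤ := by
  apply le_antisymm le_top
  rw [← PresentedGroup.closure_range_of (ΓnRels n)]
  refine (Subgroup.closure_le _).mpr ?_
  rintro _ ⟨a, rfl⟩
  cases a with
  | s => exact Subgroup.mem_sup_right (Subgroup.mem_zpowers _)
  | x =>
      apply Subgroup.mem_sup_left
      apply Subgroup.subset_closure
      exact ⟨0, Nat.pos_of_ne_zero (NeZero.ne n), (xi_zero n).symm⟩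

theorem ker_fhom (n : ℕ) [NeZero n] :
    (fhom n).ker = Subgroup.closure (SS n) := by
  apply le_antisymm
  · intro g hg
    haveI := H_normal n
    have hgtop : g ∈ (⊤ : Subgroup (Γ n)) := trivial
    rw [← sup_top n] at hgtop
    rw [← SetLike.mem_coe, Subgroup.normal_mul] at hgtop
    obtain ⟨a, ha, b, hb, rfl⟩ := hgtop
    obtain ⟨m, rfl⟩ := hb
    have hfa : fhom n a = 1 := H_le_ker n ha
    have : fhom n (a * (PresentedGroup.of ΓnGen.s : Γ n) ^ m) = ofAdd m := by
      rw [map_mul, hfa, one_mul, map_zpow]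
      have : fhom n (PresentedGroup.of ΓnGen.s) = ofAdd 1 := by simp [fhom]
      rw [this]
      apply Multiplicative.toAdd.injective
      simp [toAdd_zpow]
    rw [MonoidHom.mem_ker] at hg
    rw [hg] at this
    have hm : m = 0 := by
      have := congrArg Multiplicative.toAdd this
      simpa using this.symm
    subst hm
    simpa using ha
  · exact H_le_ker n

end GammaAux

/-- In `Γₙ`, the elements `x₀, …, x_{n-1}` generate a normal subgroup `Nₙ` isomorphic to
`ℤⁿ`, and the quotient `Γₙ / Nₙ` is isomorphic to `ℤ`: there is a surjective homomorphism
`Γₙ → ℤ` whose kernel is exactly `Nₙ`. -/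
theorem stmt_16 (n : ℕ) (hn : 2 ≤ n) :
    (Subgroup.closure {g | ∃ i : ℕ, i < n ∧ g = xi n i}).Normal ∧
    Nonempty ((Subgroup.closure {g | ∃ i : ℕ, i < n ∧ g = xi n i}) ≃*
        Multiplicative (Fin n → ℤ)) ∧
    ∃ f : PresentedGroup (ΓnRels n) →* Multiplicative ℤ, Function.Surjective f ∧
      f.ker = Subgroup.closure {g | ∃ i : ℕ, i < n ∧ g = xi n i} := by
  haveI : NeZero n := ⟨by omega⟩
  exact ⟨GammaAux.H_normal n, ⟨GammaAux.isoH n⟩,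
    GammaAux.fhom n, GammaAux.fhom_surjective n, GammaAux.ker_fhom n⟩
end
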